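/- arXiv:2303.18063 — 4 statements merged into one kernel-verified Lean document; each statement's English description precedes it below -/
import Mathlib

section
/- Let σ ≥ 2, let f(c_0) = 1 and f(c_i) = F_i for 1 ≤ i ≤ σ-1, and let code lengths be |ρ(c_0)| = σ-1 and |ρ(c_i)| = σ-i for 1 ≤ i ≤ σ-1. Then the expected code length ∑_{i=0}^{σ-1} (f(c_i)/F_{σ+1})·|ρ(c_i)| equals (F_{σ+3} - 3)/F_{σ+1}. -/
lemma fib_aux (n : ℕ) (hn : 2 ≤ n) :
    (n - 1) + (∑ i ∈ Finset.Ico 1 n, Nat.fib i * (n - i)) + 3 = Nat.fib (n + 3) := by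
  induction n, hn using Nat.le_induction with
  | base => decide
  | succ n hn ih =>
    have hsum : ∑ i ∈ Finset.Ico 1 (n + 1), Nat.fib i * (n + 1 - i)
        = (∑ i ∈ Finset.Ico 1 n, Nat.fib i * (n - i)) + ∑ i ∈ Finset.range (n + 1), Nat.fib i := by
      rw [Finset.sum_Ico_succ_top (by omega)]
      have : ∀ i ∈ Finset.Ico 1 n, Nat.fib i * (n + 1 - i) = Nat.fib i * (n - i) + Nat.fib i := by
        intro i hi
        simp only [Finset.mem_Ico] at hi
        have : n + 1 - i = (n - i) + 1 := by omega
        rw [this, Nat.mul_add, Nat.mul_one]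
      rw [Finset.sum_congr rfl this, Finset.sum_add_distrib]
      have : ∑ i ∈ Finset.range (n + 1), Nat.fib i
          = (∑ i ∈ Finset.Ico 1 n, Nat.fib i) + Nat.fib n := by
        rw [Finset.range_eq_Ico, Finset.sum_eq_sum_Ico_succ_bot (by omega), Nat.fib_zero,
          zero_add, Finset.sum_Ico_succ_top (by omega)]
      rw [this, show n + 1 - n = 1 by omega]
      ring
    have hfib : Nat.fib (n + 2) = (∑ i ∈ Finset.range (n + 1), Nat.fib i) + 1 :=
      Nat.fib_succ_eq_succ_sum (n + 1)
    have h4 : Nat.fib (n + 4) = Nat.fib (n + 2) + Nat.fib (n + 3) := Nat.fib_add_two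
    have h5 : n + 1 + 3 = n + 4 := by ring
    rw [hsum, h5]
    omega

theorem fib_expected_code_length (σ : ℕ) (hσ : 2 ≤ σ)
    (f : ℕ → ℕ) (hf0 : f 0 = 1) (hf : ∀ i, 1 ≤ i → i ≤ σ - 1 → f i = Nat.fib i)
    (L : ℕ → ℕ) (hL0 : L 0 = σ - 1) (hL : ∀ i, 1 ≤ i → i ≤ σ - 1 → L i = σ - i) :
    ∑ i ∈ Finset.range σ, ((f i : ℝ) / Nat.fib (σ + 1)) * (L i : ℝ) =
      ((Nat.fib (σ + 3) : ℝ) - 3) / Nat.fib (σ + 1) := by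
  have key : ∑ i ∈ Finset.range σ, f i * L i + 3 = Nat.fib (σ + 3) := by
    rw [Finset.range_eq_Ico]
    rw [Finset.sum_eq_sum_Ico_succ_bot (by omega)]
    have : ∀ i ∈ Finset.Ico 1 σ, f i * L i = Nat.fib i * (σ - i) := by
      intro i hi
      simp only [Finset.mem_Ico] at hi
      rw [hf i hi.1 (by omega), hL i hi.1 (by omega)]
    rw [Finset.sum_congr rfl this, hf0, hL0, one_mul]
    have := fib_aux σ hσ
    omega
  have hfibpos : 0 < Nat.fib (σ + 1) := Nat.fib_pos.mpr (by omega)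
  have hne : (Nat.fib (σ + 1) : ℝ) ≠ 0 := by positivity
  have : ∑ i ∈ Finset.range σ, ((f i : ℝ) / Nat.fib (σ + 1)) * (L i : ℝ)
      = (∑ i ∈ Finset.range σ, (f i * L i : ℕ) : ℝ) / Nat.fib (σ + 1) := by
    rw [Finset.sum_div]
    refine Finset.sum_congr rfl fun i _ => ?_
    push_cast
    ring
  rw [this]
  congr 1
  have : (Nat.fib (σ + 3) : ℝ) = (∑ i ∈ Finset.range σ, f i * L i : ℕ) + 3 := by
    rw [← key]; push_cast; ring
  rw [this]; push_cast; ring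
end

section
/- Let 4 ≤ λ ≤ σ-1, with frequencies f(c_0) = 1 and f(c_i) = F_i for 1 ≤ i ≤ σ-1, and code lengths |ρ(c_0)| = σ-1, |ρ(c_i)| = σ-i for 1 ≤ i ≤ σ-1. Then the expected decoding delay ∑_{i=0}^{σ-λ-1} (f(c_i)/F_{σ+1})·(|ρ(c_i)| - λ) equals (F_{σ-λ+3} - 3)/F_{σ+1}. -/
lemma fib_key : ∀ m : ℕ, (∑ i ∈ Finset.range m, Nat.fib i * (m - i)) + m + 2 = Nat.fib (m + 3) := by
  intro m
  induction m with
  | zero => decide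
  | succ n ih =>
    have h1 : ∀ i ∈ Finset.range (n + 1), Nat.fib i * (n + 1 - i) =
        Nat.fib i * (n - i) + Nat.fib i := by
      intro i hi
      have : i ≤ n := Nat.lt_succ_iff.mp (Finset.mem_range.mp hi)
      have : n + 1 - i = (n - i) + 1 := by omega
      rw [this, Nat.mul_add, Nat.mul_one]
    rw [Finset.sum_congr rfl h1, Finset.sum_add_distrib, Finset.sum_range_succ]
    have h2 : (∑ k ∈ Finset.range (n + 1), Nat.fib k) = Nat.fib (n + 2) - 1 := by
      have h := Nat.fib_succ_eq_succ_sum (n + 1)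
      rw [show n + 1 + 1 = n + 2 from rfl] at h
      omega
    have h3 : Nat.fib (n + 1 + 3) = Nat.fib (n + 3) + Nat.fib (n + 2) := by
      rw [show n + 1 + 3 = (n + 2) + 2 by ring, Nat.fib_add_two]
      ring_nf
    have h4 : 1 ≤ Nat.fib (n + 2) := Nat.fib_pos.mpr (by omega)
    simp only [Nat.sub_self, Nat.mul_zero]
    rw [show n + 1 + 3 = n + 4 from rfl, show n + 3 + 1 = n + 4 from rfl] at *
    omega

theorem fib_expected_delay (σ l : ℕ) (hl : 4 ≤ l) (hlσ : l ≤ σ - 1)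
    (f : ℕ → ℕ) (hf0 : f 0 = 1) (hf : ∀ i, 1 ≤ i → i ≤ σ - 1 → f i = Nat.fib i)
    (L : ℕ → ℕ) (hL0 : L 0 = σ - 1) (hL : ∀ i, 1 ≤ i → i ≤ σ - 1 → L i = σ - i) :
    ∑ i ∈ Finset.range (σ - l), ((f i : ℝ) / Nat.fib (σ + 1)) * ((L i : ℝ) - l) =
      ((Nat.fib (σ - l + 3) : ℝ) - 3) / Nat.fib (σ + 1) := by
  have hσ : l + 1 ≤ σ := by omega
  obtain ⟨k, hk⟩ : ∃ k, σ - l = k + 1 := ⟨σ - l - 1, by omega⟩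
  have hF : (Nat.fib (σ + 1) : ℝ) ≠ 0 := by
    have := Nat.fib_pos.mpr (show 0 < σ + 1 by omega)
    exact_mod_cast this.ne'
  have hterm : ∀ i, ((f i : ℝ) / Nat.fib (σ + 1)) * ((L i : ℝ) - l) =
      ((f i : ℝ) * ((L i : ℝ) - l)) / Nat.fib (σ + 1) := by
    intro i; ring
  rw [Finset.sum_congr rfl (fun i _ => hterm i), ← Finset.sum_div]
  congr 1
  rw [hk, Finset.sum_range_succ']
  have h0 : (f 0 : ℝ) * ((L 0 : ℝ) - l) = (k : ℝ) := by
    rw [hf0, hL0]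
    have : ((σ - 1 : ℕ) : ℝ) = (σ : ℝ) - 1 := by
      have : 1 ≤ σ := by omega
      push_cast [this]; ring
    rw [this]
    have hcast : (σ : ℝ) = (l : ℝ) + (k : ℝ) + 1 := by
      have : σ = l + (k + 1) := by omega
      rw [this]; push_cast; ring
    rw [hcast]; push_cast; ring
  have hi : ∀ i ∈ Finset.range k, (f (i + 1) : ℝ) * ((L (i + 1) : ℝ) - l) =
      ((Nat.fib (i + 1) * (k - i) : ℕ) : ℝ) := by
    intro i hik
    have hik' : i < k := Finset.mem_range.mp hik
    have h1 : i + 1 ≤ σ - 1 := by omega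
    rw [hf (i + 1) (by omega) h1, hL (i + 1) (by omega) h1]
    have h2 : ((σ - (i + 1) : ℕ) : ℝ) = (σ : ℝ) - (i + 1) := by
      have : i + 1 ≤ σ := by omega
      push_cast [this]; ring
    rw [h2]
    have hcast : (σ : ℝ) = (l : ℝ) + (k : ℝ) + 1 := by
      have : σ = l + (k + 1) := by omega
      rw [this]; push_cast; ring
    rw [hcast]
    have h3 : ((k - i : ℕ) : ℝ) = (k : ℝ) - i := by
      push_cast [Nat.le_of_lt hik']; ring
    push_cast [Nat.le_of_lt hik']
    ring
  rw [Finset.sum_congr rfl hi, ← Nat.cast_sum]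
  have hk2 : (∑ i ∈ Finset.range k, Nat.fib (i + 1) * (k - i)) + (k + 1) + 2
      = Nat.fib (k + 1 + 3) := by
    have := fib_key (k + 1)
    rw [Finset.sum_range_succ'] at this
    simp only [Nat.fib_zero, Nat.zero_mul, Nat.add_zero] at this
    have heq : ∀ i ∈ Finset.range k, Nat.fib (i + 1) * (k + 1 - (i + 1)) =
        Nat.fib (i + 1) * (k - i) := by
      intro i _; congr 1; omega
    rwa [Finset.sum_congr rfl heq] at this
  have : ((∑ i ∈ Finset.range k, Nat.fib (i + 1) * (k - i) : ℕ) : ℝ)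
      = (Nat.fib (k + 1 + 3) : ℝ) - (k + 1) - 2 := by
    have := hk2
    push_cast [← this]
    ring
  rw [this, h0]
  -- finish
  ring
end

section
/- Let 4 ≤ λ ≤ σ-1, with relative frequencies f^r(c_i) = f(c_i)/F_{σ+1} where f(c_0)=1, f(c_i)=F_i for 1 ≤ i ≤ σ-1, code lengths |ρ(c_0)| = σ-1, |ρ(c_i)| = σ-i, and e_ρ = (F_{σ+3}-3)/F_{σ+1} < λ. Then ∑_{i=0}^{σ-λ-1} f^r(c_i)·(|ρ(c_i)| - λ)/(λ - e_ρ) = (F_{σ-λ+3} - 3)/(λ·F_{σ+1} - F_{σ+3} + 3). -/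
/-!
Both sides have the denominator `F_{σ+1} (λ - e) = λ F_{σ+1} - F_{σ+3} + 3`, so with `m = σ - λ`
the claim is the numerator identity `∑_{i<m} f(c_i) (|ρ(c_i)| - λ) = F_{m+3} - 3`. The codewords
`c_i`, `i ≥ 1`, contribute `∑_{i<m} F_i (m - i) = F_{m+3} - m - 2` (a sum of partial sums of
Fibonacci numbers), and `c_0` the remaining `m - 1`.
-/

open Finset

theorem Nat.sum_range_fib_mul_sub (m : ℕ) :
    ∑ i ∈ range m, (Nat.fib i : ℝ) * (m - i) = Nat.fib (m + 3) - m - 2 := by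
  induction m with
  | zero => norm_num [Nat.fib_add_two]
  | succ n ih =>
    have hsum : ∑ i ∈ range n, (Nat.fib i : ℝ) = Nat.fib (n + 1) - 1 := by
      rw [Nat.fib_succ_eq_succ_sum n]; push_cast; ring
    have hsplit : ∑ i ∈ range n, (Nat.fib i : ℝ) * ((n + 1 : ℕ) - i) =
        ∑ i ∈ range n, (Nat.fib i : ℝ) * (n - i) + ∑ i ∈ range n, (Nat.fib i : ℝ) := by
      rw [← sum_add_distrib]
      exact sum_congr rfl fun i _ => by push_cast; ring
    rw [sum_range_succ, hsplit, ih, hsum]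
    have h2 : Nat.fib (n + 2) = Nat.fib n + Nat.fib (n + 1) := Nat.fib_add_two
    have h4 : Nat.fib (n + 1 + 3) = Nat.fib (n + 2) + Nat.fib (n + 3) := Nat.fib_add_two
    rw [h4, h2]; push_cast; ring

theorem sum_freq_mul_delay {σ l : ℕ} (hlσ : l < σ) {f L : ℕ → ℕ} (hf0 : f 0 = 1)
    (hf : ∀ i, 1 ≤ i → i < σ - l → f i = Nat.fib i) (hL0 : L 0 = σ - 1)
    (hL : ∀ i, 1 ≤ i → i < σ - l → L i = σ - i) :
    ∑ i ∈ range (σ - l), (f i : ℝ) * ((L i : ℝ) - l) = Nat.fib (σ - l + 3) - 3 := by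
  have hterm : ∀ i ∈ range (σ - l), (f i : ℝ) * ((L i : ℝ) - l) =
      Nat.fib i * ((σ - l : ℕ) - i : ℝ) + if i = 0 then ((σ - l : ℕ) : ℝ) - 1 else 0 := by
    intro i hi
    have him : i < σ - l := mem_range.mp hi
    rcases Nat.eq_zero_or_pos i with rfl | hi1
    · rw [hf0, hL0, if_pos rfl]
      push_cast [Nat.cast_sub hlσ.le, Nat.cast_sub (by omega : 1 ≤ σ)]
      ring
    · rw [hf i hi1 him, hL i hi1 him, if_neg hi1.ne']
      push_cast [Nat.cast_sub hlσ.le, Nat.cast_sub (by omega : i ≤ σ)]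
      ring
  rw [sum_congr rfl hterm, sum_add_distrib, Nat.sum_range_fib_mul_sub, sum_ite_eq',
    if_pos (mem_range.mpr (by omega))]
  ring

theorem fib_gamma_delay_exact_general (σ l : ℕ) (hl : 4 ≤ l) (hlσ : l ≤ σ - 1)
    (f : ℕ → ℕ) (hf0 : f 0 = 1) (hf : ∀ i, 1 ≤ i → i ≤ σ - 1 → f i = Nat.fib i)
    (L : ℕ → ℕ) (hL0 : L 0 = σ - 1) (hL : ∀ i, 1 ≤ i → i ≤ σ - 1 → L i = σ - i)
    (e : ℝ) (he : e = ((Nat.fib (σ + 3) : ℝ) - 3) / Nat.fib (σ + 1)) :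
    ∑ i ∈ Finset.range (σ - l), ((f i : ℝ) / Nat.fib (σ + 1)) * (((L i : ℝ) - l) / (l - e)) =
      ((Nat.fib (σ - l + 3) : ℝ) - 3) / (l * Nat.fib (σ + 1) - Nat.fib (σ + 3) + 3) := by
  have hF : (Nat.fib (σ + 1) : ℝ) ≠ 0 := by exact_mod_cast (Nat.fib_pos.mpr σ.succ_pos).ne'
  have hden : (l * Nat.fib (σ + 1) - Nat.fib (σ + 3) + 3 : ℝ) = Nat.fib (σ + 1) * (l - e) := by
    rw [he]; field_simp; ring
  calc ∑ i ∈ range (σ - l), ((f i : ℝ) / Nat.fib (σ + 1)) * (((L i : ℝ) - l) / (l - e))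
      = (∑ i ∈ range (σ - l), (f i : ℝ) * ((L i : ℝ) - l)) / (Nat.fib (σ + 1) * (l - e)) := by
        rw [sum_div]; simp only [div_mul_div_comm]
    _ = _ := by
        rw [sum_freq_mul_delay (by omega) hf0 (fun i h1 h2 => hf i h1 (by omega)) hL0
          (fun i h1 h2 => hL i h1 (by omega)), hden]

theorem fib_gamma_delay_exact (σ l : ℕ) (hl : 4 ≤ l) (hlσ : l ≤ σ - 1)
    (f : ℕ → ℕ) (hf0 : f 0 = 1) (hf : ∀ i, 1 ≤ i → i ≤ σ - 1 → f i = Nat.fib i)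
    (L : ℕ → ℕ) (hL0 : L 0 = σ - 1) (hL : ∀ i, 1 ≤ i → i ≤ σ - 1 → L i = σ - i)
    (e : ℝ) (he : e = ((Nat.fib (σ + 3) : ℝ) - 3) / Nat.fib (σ + 1))
    (hpos : ((Nat.fib (σ + 3) : ℝ) - 3) < l * Nat.fib (σ + 1)) :
    ∑ i ∈ Finset.range (σ - l), ((f i : ℝ) / Nat.fib (σ + 1)) * (((L i : ℝ) - l) / (l - e)) =
      ((Nat.fib (σ - l + 3) : ℝ) - 3) / (l * Nat.fib (σ + 1) - Nat.fib (σ + 3) + 3) :=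
  fib_gamma_delay_exact_general σ l hl hlσ f hf0 hf L hL0 hL e he
end

section
/- Let 4 ≤ λ ≤ σ-1 with λ·F_{σ+1} > F_{σ+3} - 3, relative frequencies f^r(c_i) = f(c_i)/F_{σ+1} (f(c_0)=1, f(c_i)=F_i for i≥1), code lengths |ρ(c_0)|=σ-1, |ρ(c_i)|=σ-i, and e_ρ = (F_{σ+3}-3)/F_{σ+1}. Then (F_{σ-λ+3}-3)/(λ·F_{σ+1} - F_{σ+3} + 3) ≤ ∑_{i=0}^{σ-λ-1} f^r(c_i)·⌈(|ρ(c_i)|-λ)/(λ-e_ρ)⌉ < (F_{σ-λ+3}-3)/(λ·F_{σ+1} - F_{σ+3} + 3) + F_{σ-λ+1}/F_{σ+1}. -/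
lemma fibsum_aux (n : ℕ) : ∑ i ∈ Finset.range n, Nat.fib (i+1) + 1 = Nat.fib (n+2) := by
  induction n with
  | zero => simp
  | succ n ih =>
    rw [Finset.sum_range_succ]
    have h : Nat.fib (n+1+2) = Nat.fib (n+1) + Nat.fib (n+2) := Nat.fib_add_two
    omega

lemma fibC_aux (k : ℕ) :
    ∑ i ∈ Finset.range k, Nat.fib (i+1) * (k - i) + k + 3 = Nat.fib (k+4) := by
  induction k with
  | zero => decide
  | succ k ih =>
    have h1 : ∑ i ∈ Finset.range (k+1), Nat.fib (i+1) * (k+1-i)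
        = ∑ i ∈ Finset.range (k+1), (Nat.fib (i+1) * (k-i) + Nat.fib (i+1)) := by
      refine Finset.sum_congr rfl fun i hi => ?_
      have hik : i ≤ k := by
        have := Finset.mem_range.mp hi; omega
      have h2 : k + 1 - i = (k - i) + 1 := by omega
      rw [h2, Nat.mul_add, Nat.mul_one]
    rw [h1, Finset.sum_add_distrib,
      Finset.sum_range_succ (fun i => Nat.fib (i+1) * (k-i))]
    have h2 : ∑ i ∈ Finset.range (k+1), Nat.fib (i+1) + 1 = Nat.fib (k+3) :=
      fibsum_aux (k+1)
    have h3 : Nat.fib (k+1+4) = Nat.fib (k+3) + Nat.fib (k+4) := Nat.fib_add_two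
    simp only [Nat.sub_self, Nat.mul_zero, Nat.add_zero]
    omega

theorem fib_gamma_delay_bounds (σ l : ℕ) (hl : 4 ≤ l) (hlσ : l ≤ σ - 1)
    (f : ℕ → ℕ) (hf0 : f 0 = 1) (hf : ∀ i, 1 ≤ i → i ≤ σ - 1 → f i = Nat.fib i)
    (L : ℕ → ℕ) (hL0 : L 0 = σ - 1) (hL : ∀ i, 1 ≤ i → i ≤ σ - 1 → L i = σ - i)
    (e : ℝ) (he : e = ((Nat.fib (σ + 3) : ℝ) - 3) / Nat.fib (σ + 1))
    (hpos : ((Nat.fib (σ + 3) : ℝ) - 3) < l * Nat.fib (σ + 1)) :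
    ((Nat.fib (σ - l + 3) : ℝ) - 3) / (l * Nat.fib (σ + 1) - Nat.fib (σ + 3) + 3) ≤
      ∑ i ∈ Finset.range (σ - l),
        ((f i : ℝ) / Nat.fib (σ + 1)) * (⌈((L i : ℝ) - l) / (l - e)⌉ : ℝ) ∧
    ∑ i ∈ Finset.range (σ - l),
        ((f i : ℝ) / Nat.fib (σ + 1)) * (⌈((L i : ℝ) - l) / (l - e)⌉ : ℝ) <
      ((Nat.fib (σ - l + 3) : ℝ) - 3) / (l * Nat.fib (σ + 1) - Nat.fib (σ + 3) + 3) +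
        (Nat.fib (σ - l + 1) : ℝ) / Nat.fib (σ + 1) := by
  have hσ5 : 5 ≤ σ := by omega
  obtain ⟨k, hk⟩ : ∃ k, σ - l = k + 1 := ⟨σ - l - 1, by omega⟩
  set N : ℝ := (Nat.fib (σ+1) : ℝ) with hNdef
  have hN : 0 < N := by
    have h : 0 < Nat.fib (σ+1) := Nat.fib_pos.mpr (by omega)
    rw [hNdef]
    exact_mod_cast h
  set D : ℝ := (l:ℝ) * N - (Nat.fib (σ+3):ℝ) + 3 with hDdef
  have hD : 0 < D := by rw [hDdef]; linarith
  have hle : (l:ℝ) - e = D / N := by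
    rw [he, hDdef]; field_simp; ring
  have hlepos : 0 < (l:ℝ) - e := by rw [hle]; positivity
  have hfpos : ∀ i ∈ Finset.range (σ - l), 0 < (f i : ℝ) := by
    intro i hi
    have hik := Finset.mem_range.mp hi
    rcases Nat.eq_zero_or_pos i with h | h
    · subst h; rw [hf0]; norm_num
    · rw [hf i h (by omega)]
      exact_mod_cast Nat.fib_pos.mpr h
  have hS : ∑ i ∈ Finset.range (σ - l), (f i : ℝ) * ((L i:ℝ) - (l:ℝ))
      = (Nat.fib (σ - l + 3) : ℝ) - 3 := by
    rw [hk, Finset.sum_range_succ']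
    have h0 : (f 0 : ℝ) * ((L 0:ℝ) - l) = (k:ℝ) := by
      rw [hf0, hL0, show σ - 1 = l + k from by omega]
      push_cast; ring
    have h1 : ∀ i ∈ Finset.range k, (f (i+1) : ℝ) * ((L (i+1):ℝ) - l)
        = ((Nat.fib (i+1) * (k - i) : ℕ) : ℝ) := by
      intro i hi
      have hik : i < k := Finset.mem_range.mp hi
      rw [hf (i+1) (by omega) (by omega), hL (i+1) (by omega) (by omega),
        show σ - (i+1) = l + (k - i) from by omega]
      have hik' : i ≤ k := hik.le
      push_cast [Nat.cast_sub hik']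
      ring
    rw [Finset.sum_congr rfl h1, h0, ← Nat.cast_sum]
    have h3 : ((∑ i ∈ Finset.range k, Nat.fib (i+1)*(k-i) : ℕ):ℝ) + (k:ℝ) + 3
        = (Nat.fib (k+1+3):ℝ) := by exact_mod_cast fibC_aux k
    linarith
  have hW : ∑ i ∈ Finset.range (σ - l), (f i : ℝ) = (Nat.fib (σ - l + 1) : ℝ) := by
    rw [hk, Finset.sum_range_succ', hf0]
    have h1 : ∀ i ∈ Finset.range k, (f (i+1):ℝ) = ((Nat.fib (i+1) : ℕ):ℝ) := by
      intro i hi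
      have hik : i < k := Finset.mem_range.mp hi
      rw [hf (i+1) (by omega) (by omega)]
    rw [Finset.sum_congr rfl h1, ← Nat.cast_sum]
    exact_mod_cast fibsum_aux k
  have hkey : ∑ i ∈ Finset.range (σ - l),
      ((f i:ℝ)/N) * (((L i:ℝ)-(l:ℝ))/((l:ℝ)-e))
      = ((Nat.fib (σ - l + 3):ℝ) - 3)/D := by
    simp only [div_mul_div_comm]
    rw [← Finset.sum_div, hS]
    congr 1
    rw [hle]
    field_simp
  constructor
  · calc ((Nat.fib (σ - l + 3):ℝ) - 3)/D
        = ∑ i ∈ Finset.range (σ - l),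
            ((f i:ℝ)/N) * (((L i:ℝ)-(l:ℝ))/((l:ℝ)-e)) := hkey.symm
      _ ≤ ∑ i ∈ Finset.range (σ - l),
            ((f i : ℝ) / N) * (⌈((L i : ℝ) - l) / ((l:ℝ) - e)⌉ : ℝ) := by
          refine Finset.sum_le_sum fun i hi => ?_
          exact mul_le_mul_of_nonneg_left (Int.le_ceil _)
            (div_nonneg (Nat.cast_nonneg _) hN.le)
  · calc ∑ i ∈ Finset.range (σ - l),
            ((f i : ℝ) / N) * (⌈((L i : ℝ) - l) / ((l:ℝ) - e)⌉ : ℝ)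
        < ∑ i ∈ Finset.range (σ - l),
            (((f i:ℝ)/N) * (((L i:ℝ)-(l:ℝ))/((l:ℝ)-e)) + (f i:ℝ)/N) := by
          refine Finset.sum_lt_sum_of_nonempty (by rw [hk]; exact Finset.nonempty_range_add_one)
            fun i hi => ?_
          have h1 : (0:ℝ) < (f i:ℝ) / N := div_pos (hfpos i hi) hN
          have h2 := Int.ceil_lt_add_one (((L i : ℝ) - l) / ((l:ℝ) - e))
          nlinarith
      _ = ((Nat.fib (σ - l + 3):ℝ) - 3)/D + (Nat.fib (σ - l + 1):ℝ)/N := by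
          rw [Finset.sum_add_distrib, hkey, ← Finset.sum_div, hW]
end
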